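/- For all ℓ₀, ℓ₁, ℓ₂ ∈ B_c(Y) one has σ₁(ℓ₀ ⋆ ℓ₁, ℓ₂) − σ₁(ℓ₀, ℓ₁ ⋆ ℓ₂) + σ₁(ℓ₂ ⋆ ℓ₀, ℓ₁) = 0; that is, the Hochschild coboundary of σ₁ vanishes, so σ₁ is a cyclic 1-cocycle on the convolution algebra B_c(Y). -/

import Mathlib

open MeasureTheory

noncomputable section

/-- The indicator function of `(-∞, -λ] ⊆ ℝ`, complex-valued. -/
def chi (l : ℝ) (s : ℝ) : ℂ := if s ≤ -l then 1 else 0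

/-- `ℓ` belongs to `B_c(Y)`: it is continuous and supported in `Y × Y × [-R, R]`
for some `R > 0`. -/
def MemBc {Y : Type*} [TopologicalSpace Y] (ℓ : Y → Y → ℝ → ℂ) : Prop :=
  Continuous (fun q : Y × Y × ℝ => ℓ q.1 q.2.1 q.2.2) ∧
    ∃ R > (0 : ℝ), ∀ y y' t, t ∉ Set.Icc (-R) R → ℓ y y' t = 0

/-- The convolution product on `B_c(Y)`:
`(ℓ ⋆ ℓ')(y, y'', u) = ∫_Y ∫_ℝ ℓ(y, y', t) ℓ'(y', y'', u − t) dt dμ(y')`. -/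
def conv {Y : Type*} [MeasurableSpace Y] (μ : Measure Y)
    (ℓ ℓ' : Y → Y → ℝ → ℂ) : Y → Y → ℝ → ℂ :=
  fun y y'' u => ∫ q : Y × ℝ, ℓ y q.1 q.2 * ℓ' q.1 y'' (u - q.2) ∂(μ.prod volume)

/-- Roe's functional `σ₁^λ` in kernel form; `σ₁ := σ₁⁰`. -/
def sigma1 {Y : Type*} [MeasurableSpace Y] (μ : Measure Y) (l : ℝ)
    (ℓ₀ ℓ₁ : Y → Y → ℝ → ℂ) : ℂ :=
  ∫ q : (Y × Y) × ℝ × ℝ,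
    ℓ₀ q.1.1 q.1.2 (q.2.1 - q.2.2) * ℓ₁ q.1.2 q.1.1 (q.2.2 - q.2.1) *
      (chi l q.2.2 - chi l q.2.1) ∂((μ.prod μ).prod (volume.prod volume))

/-! Expanding the convolution, each term of the coboundary becomes an integral over `(Y × ℝ)³` of
the cyclic kernel `ℓ₀(y₀, y₁, s₀ - s₁) ℓ₁(y₁, y₂, s₁ - s₂) ℓ₂(y₂, y₀, s₂ - s₀)` against a
difference `χ(sⱼ) - χ(sᵢ)`: directly for `σ₁(ℓ₀ ⋆ ℓ₁, ℓ₂)`, and for the other two terms after the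
antisymmetry `σ₁(a, b) = -σ₁(b, a)` and a cyclic relabelling of the variables. The three differences
`χ(s₂) - χ(s₀)`, `χ(s₀) - χ(s₁)`, `χ(s₁) - χ(s₂)` sum to zero. Everything is integrable, as Fubini
and the addition of the integrals require, because the kernel bounds each `sᵢ - sⱼ` and
`χ(x) ≠ χ(y)` forces `|x|, |y| ≤ |x - y|`. -/

section Rearrangements

variable {α β γ δ : Type*} [MeasurableSpace α] [MeasurableSpace β] [MeasurableSpace γ]
  [MeasurableSpace δ]

variable (α β γ δ) in
def MeasurableEquiv.prodProdProdComm : (α × β) × γ × δ ≃ᵐ (α × γ) × β × δ where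
  toEquiv := Equiv.prodProdProdComm α β γ δ
  measurable_toFun := by
    change Measurable fun p : (α × β) × γ × δ => ((p.1.1, p.2.1), (p.1.2, p.2.2)); fun_prop
  measurable_invFun := by
    change Measurable fun p : (α × γ) × β × δ => ((p.1.1, p.2.1), (p.1.2, p.2.2)); fun_prop

theorem measurePreserving_prodProdProdComm (μa : Measure α) (μb : Measure β) (μc : Measure γ)
    (μd : Measure δ) [SFinite μa] [SFinite μb] [SFinite μc] [SFinite μd] :
    MeasurePreserving (MeasurableEquiv.prodProdProdComm α β γ δ)
      ((μa.prod μb).prod (μc.prod μd)) ((μa.prod μc).prod (μb.prod μd)) := by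
  have hbcd : MeasurePreserving (fun p : β × γ × δ => (p.2.1, p.1, p.2.2))
      (μb.prod (μc.prod μd)) (μc.prod (μb.prod μd)) :=
    (measurePreserving_prodAssoc μc μb μd).comp
      ((Measure.measurePreserving_swap.prod (MeasurePreserving.id μd)).comp
        ((measurePreserving_prodAssoc μb μc μd).symm _))
  exact ((measurePreserving_prodAssoc μa μc (μb.prod μd)).symm _).comp
    (((MeasurePreserving.id μa).prod hbcd).comp (measurePreserving_prodAssoc μa μb (μc.prod μd)))

variable (α) in
def MeasurableEquiv.prodRotate : α × α × α ≃ᵐ α × α × α :=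
  MeasurableEquiv.prodComm.trans MeasurableEquiv.prodAssoc

theorem measurePreserving_prodRotate (μ : Measure α) [SFinite μ] :
    MeasurePreserving (MeasurableEquiv.prodRotate α) (μ.prod (μ.prod μ)) (μ.prod (μ.prod μ)) :=
  (measurePreserving_prodAssoc μ μ μ).comp Measure.measurePreserving_swap

@[simp]
theorem MeasurableEquiv.prodRotate_apply (a b c : α) :
    MeasurableEquiv.prodRotate α (a, b, c) = (b, c, a) :=
  rfl

end Rearrangements

@[fun_prop]
theorem measurable_chi (l : ℝ) : Measurable (chi l) :=
  Measurable.ite measurableSet_Iic measurable_const measurable_const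

theorem norm_chi_sub_chi_le (l x y : ℝ) : ‖chi l x - chi l y‖ ≤ 1 := by
  unfold chi; split_ifs <;> simp

theorem abs_le_abs_sub_of_chi_sub_chi_ne_zero {x y : ℝ} (h : chi 0 x - chi 0 y ≠ 0) :
    |x| ≤ |x - y| ∧ |y| ≤ |x - y| := by
  unfold chi at h
  rw [neg_zero] at h
  split_ifs at h with hx hy hy
  · simp at h
  · rw [abs_of_nonpos hx, abs_of_pos (not_le.mp hy), abs_of_neg (by linarith)]
    constructor <;> linarith
  · rw [abs_of_pos (not_le.mp hx), abs_of_nonpos hy, abs_of_pos (by linarith)]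
    constructor <;> linarith
  · simp at h

namespace MemBc

variable {Y : Type*} [TopologicalSpace Y] {ℓ : Y → Y → ℝ → ℂ}

theorem exists_bound [CompactSpace Y] (h : MemBc ℓ) : ∃ C, 0 ≤ C ∧ ∀ y y' t, ‖ℓ y y' t‖ ≤ C := by
  obtain ⟨hc, R, -, hR⟩ := h
  obtain ⟨C, hC⟩ :=
    (isCompact_univ.prod (isCompact_univ.prod isCompact_Icc)).exists_bound_of_continuousOn
      hc.continuousOn
  refine ⟨max C 0, le_max_right _ _, fun y y' t => ?_⟩
  by_cases ht : t ∈ Set.Icc (-R) R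
  · exact (hC (y, y', t) ⟨trivial, trivial, ht⟩).trans (le_max_left _ _)
  · simp [hR y y' t ht]

theorem exists_abs_le (h : MemBc ℓ) : ∃ R, ∀ y y' t, ℓ y y' t ≠ 0 → |t| ≤ R := by
  obtain ⟨-, R, -, hR⟩ := h
  exact ⟨R, fun y y' t ht => abs_le.mpr (not_not.mp (mt (hR y y' t) ht))⟩

theorem continuous_comp {X : Type*} [TopologicalSpace X] (h : MemBc ℓ) {f g : X → Y} {e : X → ℝ}
    (hf : Continuous f) (hg : Continuous g) (he : Continuous e) :
    Continuous fun x => ℓ (f x) (g x) (e x) :=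
  h.1.comp (hf.prodMk (hg.prodMk he))

end MemBc

/-- In coordinates `w = ((y₀, s₀), (y₁, s₁), (y₂, s₂))` this is
`ℓ₀(y₀, y₁, s₀ - s₁) ℓ₁(y₁, y₂, s₁ - s₂) ℓ₂(y₂, y₀, s₂ - s₀)`, the integrand of
`Tr(ℓ₀ ⋆ ℓ₁ ⋆ ℓ₂)`. -/
def tripleKernel {Y : Type*} (ℓ₀ ℓ₁ ℓ₂ : Y → Y → ℝ → ℂ) (w : (Y × ℝ) × (Y × ℝ) × (Y × ℝ)) : ℂ :=
  ℓ₀ w.1.1 w.2.1.1 (w.1.2 - w.2.1.2) * ℓ₁ w.2.1.1 w.2.2.1 (w.2.1.2 - w.2.2.2) *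
    ℓ₂ w.2.2.1 w.1.1 (w.2.2.2 - w.1.2)

theorem continuous_tripleKernel {Y : Type*} [TopologicalSpace Y] {ℓ₀ ℓ₁ ℓ₂ : Y → Y → ℝ → ℂ}
    (h₀ : MemBc ℓ₀) (h₁ : MemBc ℓ₁) (h₂ : MemBc ℓ₂) : Continuous (tripleKernel ℓ₀ ℓ₁ ℓ₂) :=
  ((h₀.continuous_comp (by fun_prop) (by fun_prop) (by fun_prop)).mul
    (h₁.continuous_comp (by fun_prop) (by fun_prop) (by fun_prop))).mul
    (h₂.continuous_comp (by fun_prop) (by fun_prop) (by fun_prop))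

section Cylinder

variable {Y : Type*} [MeasurableSpace Y]

def tripleTrace (μ : Measure Y) (ℓ₀ ℓ₁ ℓ₂ : Y → Y → ℝ → ℂ) (g : ℝ → ℝ → ℝ → ℂ) : ℂ :=
  ∫ w, tripleKernel ℓ₀ ℓ₁ ℓ₂ w * g w.1.2 w.2.1.2 w.2.2.2
    ∂((μ.prod volume).prod ((μ.prod volume).prod (μ.prod volume)))

theorem tripleTrace_rotate (μ : Measure Y) [SFinite μ] (ℓ₀ ℓ₁ ℓ₂ : Y → Y → ℝ → ℂ)
    (g : ℝ → ℝ → ℝ → ℂ) :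
    tripleTrace μ ℓ₁ ℓ₂ ℓ₀ g = tripleTrace μ ℓ₀ ℓ₁ ℓ₂ fun s₀ s₁ s₂ => g s₁ s₂ s₀ := by
  rw [tripleTrace, ← (measurePreserving_prodRotate (μ.prod volume)).integral_comp']
  congr 1 with ⟨w₀, w₁, w₂⟩
  simp only [MeasurableEquiv.prodRotate_apply, tripleKernel]
  ring

theorem sigma1_eq_integral_prod (μ : Measure Y) [SFinite μ] (l : ℝ) (ℓ₀ ℓ₁ : Y → Y → ℝ → ℂ) :
    sigma1 μ l ℓ₀ ℓ₁ = ∫ p : (Y × ℝ) × (Y × ℝ),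
      ℓ₀ p.1.1 p.2.1 (p.1.2 - p.2.2) * ℓ₁ p.2.1 p.1.1 (p.2.2 - p.1.2) *
        (chi l p.2.2 - chi l p.1.2) ∂((μ.prod volume).prod (μ.prod volume)) := by
  rw [sigma1, ← (measurePreserving_prodProdProdComm μ μ volume volume).integral_comp']
  rfl

theorem sigma1_swap (μ : Measure Y) [SFinite μ] (l : ℝ) (ℓ₀ ℓ₁ : Y → Y → ℝ → ℂ) :
    sigma1 μ l ℓ₁ ℓ₀ = -sigma1 μ l ℓ₀ ℓ₁ := by
  rw [sigma1_eq_integral_prod, sigma1_eq_integral_prod, ← integral_neg, ← integral_prod_swap]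
  congr 1 with p
  simp only [Prod.fst_swap, Prod.snd_swap]
  ring

variable (Y) in
/-- The variables of `σ₁(ℓ₀ ⋆ ℓ₁, ℓ₂)` in terms of those of `tripleKernel`: the outer pair is
`((y₀, s₀), (y₂, s₂))` and the convolution variable is `(y₁, s₀ - s₁)`. -/
def convCoordEquiv : (Y × ℝ) × (Y × ℝ) × (Y × ℝ) ≃ᵐ ((Y × ℝ) × (Y × ℝ)) × (Y × ℝ) where
  toFun w := ((w.1, w.2.2), (w.2.1.1, w.1.2 - w.2.1.2))
  invFun z := (z.1.1, (z.2.1, z.1.1.2 - z.2.2), z.1.2)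
  left_inv w := by simp
  right_inv z := by simp
  measurable_toFun := by
    change Measurable fun w : (Y × ℝ) × (Y × ℝ) × (Y × ℝ) =>
      ((w.1, w.2.2), (w.2.1.1, w.1.2 - w.2.1.2))
    fun_prop
  measurable_invFun := by
    change Measurable fun z : ((Y × ℝ) × (Y × ℝ)) × (Y × ℝ) =>
      (z.1.1, (z.2.1, z.1.1.2 - z.2.2), z.1.2)
    fun_prop

theorem measurePreserving_convCoordEquiv (μ : Measure Y) [SFinite μ] :
    MeasurePreserving (convCoordEquiv Y)
      ((μ.prod volume).prod ((μ.prod volume).prod (μ.prod volume)))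
      (((μ.prod volume).prod (μ.prod volume)).prod (μ.prod volume)) := by
  set m := μ.prod (volume : Measure ℝ)
  have hshear : MeasurePreserving
      (fun w : (Y × ℝ) × (Y × ℝ) × (Y × ℝ) => (w.1, (w.2.1.1, w.1.2 - w.2.1.2), w.2.2))
      (m.prod (m.prod m)) (m.prod (m.prod m)) :=
    (MeasurePreserving.id m).skew_product
      (g := fun (w : Y × ℝ) (p : (Y × ℝ) × (Y × ℝ)) => ((p.1.1, w.2 - p.1.2), p.2)) (by fun_prop)
      (Filter.Eventually.of_forall fun w =>
        (((MeasurePreserving.id μ).prod (Measure.measurePreserving_sub_left volume w.2)).prod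
          (MeasurePreserving.id m)).map_eq)
  exact ((measurePreserving_prodAssoc m m m).symm _).comp
    (((MeasurePreserving.id m).prod Measure.measurePreserving_swap).comp hshear)

end Cylinder

section Cocycle

variable {Y : Type*} [TopologicalSpace Y] [SecondCountableTopology Y] [CompactSpace Y]
  [MeasurableSpace Y] [OpensMeasurableSpace Y] (μ : Measure Y) [IsFiniteMeasure μ]
  {ℓ₀ ℓ₁ ℓ₂ : Y → Y → ℝ → ℂ}

/-- The support condition on `g` holds for every difference `χ(sⱼ) - χ(sᵢ)`, `i ≠ j`. -/
theorem integrable_tripleKernel_mul (h₀ : MemBc ℓ₀) (h₁ : MemBc ℓ₁) (h₂ : MemBc ℓ₂)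
    {g : ℝ → ℝ → ℝ → ℂ}
    (hg : Measurable fun s : ℝ × ℝ × ℝ => g s.1 s.2.1 s.2.2) {C : ℝ}
    (hgC : ∀ s₀ s₁ s₂, ‖g s₀ s₁ s₂‖ ≤ C)
    (hg_supp : ∀ s₀ s₁ s₂, g s₀ s₁ s₂ ≠ 0 → |s₀| ≤ |s₀ - s₁| + |s₁ - s₂|) :
    Integrable (fun w => tripleKernel ℓ₀ ℓ₁ ℓ₂ w * g w.1.2 w.2.1.2 w.2.2.2)
      ((μ.prod volume).prod ((μ.prod volume).prod (μ.prod volume))) := by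
  obtain ⟨C₀, hC₀_nonneg, hC₀⟩ := h₀.exists_bound
  obtain ⟨C₁, hC₁_nonneg, hC₁⟩ := h₁.exists_bound
  obtain ⟨C₂, hC₂_nonneg, hC₂⟩ := h₂.exists_bound
  obtain ⟨R₀, hR₀⟩ := h₀.exists_abs_le
  obtain ⟨R₁, hR₁⟩ := h₁.exists_abs_le
  obtain ⟨R₂, hR₂⟩ := h₂.exists_abs_le
  set I := Set.Icc (-(2 * (R₀ + R₁ + R₂))) (2 * (R₀ + R₁ + R₂))
  set K : Set ((Y × ℝ) × (Y × ℝ) × (Y × ℝ)) :=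
    (Set.univ ×ˢ I) ×ˢ (Set.univ ×ˢ I) ×ˢ (Set.univ ×ˢ I)
  have hK : IsCompact K := by
    have hI : IsCompact (Set.univ ×ˢ I : Set (Y × ℝ)) := isCompact_univ.prod isCompact_Icc
    exact hI.prod (hI.prod hI)
  refine IntegrableOn.integrable_of_forall_notMem_eq_zero (s := K)
    (Measure.integrableOn_of_bounded hK.measure_lt_top.ne
      (((continuous_tripleKernel h₀ h₁ h₂).aestronglyMeasurable).mul
        (hg.comp (f := fun w : (Y × ℝ) × (Y × ℝ) × (Y × ℝ) => (w.1.2, w.2.1.2, w.2.2.2))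
          (by fun_prop)).aestronglyMeasurable) (M := C₀ * C₁ * C₂ * C)
      (ae_of_all _ fun w => ?_)) fun w hw => ?_
  · simp only [tripleKernel, norm_mul]
    gcongr
    exacts [hC₀ .., hC₁ .., hC₂ .., hgC ..]
  · by_contra hne
    simp only [tripleKernel, mul_ne_zero_iff] at hne
    obtain ⟨⟨⟨hℓ₀, hℓ₁⟩, hℓ₂⟩, hg_ne⟩ := hne
    have hs₀₁ := hR₀ _ _ _ hℓ₀
    have hs₁₂ := hR₁ _ _ _ hℓ₁
    have hs₂₀ := hR₂ _ _ _ hℓ₂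
    have hs₀ := hg_supp _ _ _ hg_ne
    have hs₁ := abs_sub_abs_le_abs_sub w.2.1.2 w.1.2
    have hs₂ := abs_sub_abs_le_abs_sub w.2.2.2 w.1.2
    rw [abs_sub_comm] at hs₁
    apply hw
    refine ⟨⟨trivial, abs_le.mp ?_⟩, ⟨trivial, abs_le.mp ?_⟩, ⟨trivial, abs_le.mp ?_⟩⟩ <;>
      linarith [abs_nonneg (w.1.2 - w.2.1.2), abs_nonneg (w.2.1.2 - w.2.2.2),
        abs_nonneg (w.2.2.2 - w.1.2)]

theorem integrable_tripleKernel_mul_chi_sub_chi (h₀ : MemBc ℓ₀) (h₁ : MemBc ℓ₁)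
    (h₂ : MemBc ℓ₂) :
    Integrable (fun w => tripleKernel ℓ₀ ℓ₁ ℓ₂ w * (chi 0 w.2.2.2 - chi 0 w.1.2))
      ((μ.prod volume).prod ((μ.prod volume).prod (μ.prod volume))) :=
  integrable_tripleKernel_mul μ h₀ h₁ h₂ (g := fun s₀ _ s₂ => chi 0 s₂ - chi 0 s₀)
    (by fun_prop) (fun _ _ _ => norm_chi_sub_chi_le ..) fun s₀ s₁ s₂ h =>
      ((abs_le_abs_sub_of_chi_sub_chi_ne_zero h).2.trans_eq (abs_sub_comm _ _)).trans
        (abs_sub_le _ _ _)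

theorem sigma1_conv_eq_tripleTrace (h₀ : MemBc ℓ₀) (h₁ : MemBc ℓ₁) (h₂ : MemBc ℓ₂) :
    sigma1 μ 0 (conv μ ℓ₀ ℓ₁) ℓ₂ = tripleTrace μ ℓ₀ ℓ₁ ℓ₂ fun s₀ _ s₂ => chi 0 s₂ - chi 0 s₀ := by
  set F : ((Y × ℝ) × (Y × ℝ)) × (Y × ℝ) → ℂ := fun z =>
    ℓ₀ z.1.1.1 z.2.1 z.2.2 * ℓ₁ z.2.1 z.1.2.1 (z.1.1.2 - z.1.2.2 - z.2.2) *
      (ℓ₂ z.1.2.1 z.1.1.1 (z.1.2.2 - z.1.1.2) * (chi 0 z.1.2.2 - chi 0 z.1.1.2))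
  have hF : ∀ w, F (convCoordEquiv Y w) =
      tripleKernel ℓ₀ ℓ₁ ℓ₂ w * (chi 0 w.2.2.2 - chi 0 w.1.2) := by
    rintro ⟨⟨y₀, s₀⟩, ⟨y₁, s₁⟩, ⟨y₂, s₂⟩⟩
    simp only [F, convCoordEquiv, MeasurableEquiv.coe_mk, Equiv.coe_fn_mk, tripleKernel]
    rw [show s₀ - s₂ - (s₀ - s₁) = s₁ - s₂ by ring]
    ring
  have hΦ := measurePreserving_convCoordEquiv μ
  have hint : Integrable F (((μ.prod volume).prod (μ.prod volume)).prod (μ.prod volume)) := by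
    refine (hΦ.integrable_comp_emb (convCoordEquiv Y).measurableEmbedding).mp ?_
    simp only [Function.comp_def, hF]
    exact integrable_tripleKernel_mul_chi_sub_chi μ h₀ h₁ h₂
  calc sigma1 μ 0 (conv μ ℓ₀ ℓ₁) ℓ₂
      = ∫ p, ∫ q, F (p, q) ∂(μ.prod volume) ∂((μ.prod volume).prod (μ.prod volume)) := by
        rw [sigma1_eq_integral_prod]
        congr 1 with p
        rw [conv, mul_assoc, ← integral_mul_const]
    _ = ∫ z, F z ∂(((μ.prod volume).prod (μ.prod volume)).prod (μ.prod volume)) :=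
        integral_integral hint
    _ = _ := by
        rw [← hΦ.integral_comp']
        simp only [hF]
        rfl

theorem tripleTrace_chi_sub_cyclic_sum_eq_zero (h₀ : MemBc ℓ₀) (h₁ : MemBc ℓ₁) (h₂ : MemBc ℓ₂) :
    (tripleTrace μ ℓ₀ ℓ₁ ℓ₂ fun s₀ _ s₂ => chi 0 s₂ - chi 0 s₀) +
      (tripleTrace μ ℓ₀ ℓ₁ ℓ₂ fun s₀ s₁ _ => chi 0 s₀ - chi 0 s₁) +
      (tripleTrace μ ℓ₀ ℓ₁ ℓ₂ fun _ s₁ s₂ => chi 0 s₁ - chi 0 s₂) = 0 := by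
  have i₂₀ := integrable_tripleKernel_mul_chi_sub_chi μ h₀ h₁ h₂
  have i₀₁ := integrable_tripleKernel_mul μ h₀ h₁ h₂ (g := fun s₀ s₁ _ => chi 0 s₀ - chi 0 s₁)
    (by fun_prop) (fun _ _ _ => norm_chi_sub_chi_le ..) fun s₀ s₁ s₂ h =>
      (abs_le_abs_sub_of_chi_sub_chi_ne_zero h).1.trans (le_add_of_nonneg_right (abs_nonneg _))
  have i₁₂ := integrable_tripleKernel_mul μ h₀ h₁ h₂ (g := fun _ s₁ s₂ => chi 0 s₁ - chi 0 s₂)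
    (by fun_prop) (fun _ _ _ => norm_chi_sub_chi_le ..) fun s₀ s₁ s₂ h => by
      linarith [(abs_le_abs_sub_of_chi_sub_chi_ne_zero h).1, abs_sub_abs_le_abs_sub s₀ s₁]
  rw [tripleTrace, tripleTrace, tripleTrace, ← integral_add' i₂₀ i₀₁,
    ← integral_add' (i₂₀.add i₀₁) i₁₂]
  refine (integral_congr_ae (ae_of_all _ fun w => ?_)).trans (integral_zero _ _)
  simp only [Pi.add_apply]
  ring

end Cocycle

/-- the Hochschild coboundary of `σ₁` vanishes on the convolution
algebra `B_c(Y)`: `σ₁(ℓ₀⋆ℓ₁, ℓ₂) − σ₁(ℓ₀, ℓ₁⋆ℓ₂) + σ₁(ℓ₂⋆ℓ₀, ℓ₁) = 0`. -/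
theorem sigma1_hochschild_cocycle
    {Y : Type*} [MetricSpace Y] [CompactSpace Y] [MeasurableSpace Y] [BorelSpace Y]
    (μ : Measure Y) [IsFiniteMeasure μ]
    (ℓ₀ ℓ₁ ℓ₂ : Y → Y → ℝ → ℂ) (h₀ : MemBc ℓ₀) (h₁ : MemBc ℓ₁) (h₂ : MemBc ℓ₂) :
    sigma1 μ 0 (conv μ ℓ₀ ℓ₁) ℓ₂ - sigma1 μ 0 ℓ₀ (conv μ ℓ₁ ℓ₂) +
      sigma1 μ 0 (conv μ ℓ₂ ℓ₀) ℓ₁ = 0 := by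
  rw [sigma1_swap μ 0 (conv μ ℓ₁ ℓ₂) ℓ₀, sigma1_conv_eq_tripleTrace μ h₀ h₁ h₂,
    sigma1_conv_eq_tripleTrace μ h₁ h₂ h₀, sigma1_conv_eq_tripleTrace μ h₂ h₀ h₁,
    tripleTrace_rotate μ ℓ₀ ℓ₁ ℓ₂, tripleTrace_rotate μ ℓ₁ ℓ₂ ℓ₀, tripleTrace_rotate μ ℓ₀ ℓ₁ ℓ₂,
    sub_neg_eq_add]
  exact tripleTrace_chi_sub_cyclic_sum_eq_zero μ h₀ h₁ h₂

end
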